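/- arXiv:1809.06848 — 9 statements merged into one kernel-verified Lean document; each statement's English description precedes it below -/
import Mathlib

section
/- Let a > 0 and let u : ℝ → ℝ be differentiable with u(0) = u₀ > 0 and u'(t) = 2a·u(t)/(1 + exp(u(t))) for all t ≥ 0. Then u is strictly increasing and for all t ≥ 0, u(t) ≤ 2·log(a·t + exp(u₀/2)). -/
/-!
Since the vector field `2 a u / (1 + exp u)` is positive at `u = u₀ > 0`, the solution can never
fall back to its initial value, so `u ≥ u₀ > 0` and `u' > 0`. For the growth bound, the
elementary inequality `u ≤ exp (u / 2)` gives `u exp (u / 2) ≤ 1 + exp u`, i.e. the derivative of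
`exp (u / 2)` is at most `a`; hence `exp (u t / 2) ≤ a t + exp (u₀ / 2)`.
-/

open Real Set

section Comparison

variable {f g f' g' : ℝ → ℝ} {t₀ : ℝ}

theorem le_on_Ici_of_hasDerivAt_lt_of_eq (hf : ∀ t ≥ t₀, HasDerivAt f (f' t) t)
    (hg : ∀ t ≥ t₀, HasDerivAt g (g' t) t) (h₀ : f t₀ ≤ g t₀)
    (hlt : ∀ t ≥ t₀, f t = g t → f' t < g' t) : ∀ t ≥ t₀, f t ≤ g t := fun t ht =>
  image_le_of_deriv_right_lt_deriv_boundary' (b := t)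
    (fun s hs => (hf s hs.1).continuousAt.continuousWithinAt)
    (fun s hs => (hf s hs.1).hasDerivWithinAt) h₀
    (fun s hs => (hg s hs.1).continuousAt.continuousWithinAt)
    (fun s hs => (hg s hs.1).hasDerivWithinAt) (fun s hs => hlt s hs.1) ⟨ht, le_rfl⟩

theorem le_on_Ici_of_hasDerivAt_le (hf : ∀ t ≥ t₀, HasDerivAt f (f' t) t)
    (hg : ∀ t ≥ t₀, HasDerivAt g (g' t) t) (h₀ : f t₀ ≤ g t₀)
    (hle : ∀ t ≥ t₀, f' t ≤ g' t) : ∀ t ≥ t₀, f t ≤ g t := fun t ht =>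
  image_le_of_deriv_right_le_deriv_boundary (b := t)
    (fun s hs => (hf s hs.1).continuousAt.continuousWithinAt)
    (fun s hs => (hf s hs.1).hasDerivWithinAt) h₀
    (fun s hs => (hg s hs.1).continuousAt.continuousWithinAt)
    (fun s hs => (hg s hs.1).hasDerivWithinAt) (fun s hs => hle s hs.1) ⟨ht, le_rfl⟩

end Comparison

theorem Real.le_exp_half (y : ℝ) : y ≤ exp (y / 2) := by
  rcases le_or_gt y 0 with hy | hy
  · exact hy.trans (exp_pos _).le
  nlinarith [quadratic_le_exp_of_nonneg (by positivity : 0 ≤ y / 2), sq_nonneg (y - 2)]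

theorem Real.mul_exp_half_le_one_add_exp (y : ℝ) : y * exp (y / 2) ≤ 1 + exp y :=
  calc y * exp (y / 2) ≤ exp (y / 2) * exp (y / 2) :=
        mul_le_mul_of_nonneg_right (le_exp_half y) (exp_pos _).le
    _ = exp y := by rw [← exp_add, add_halves]
    _ ≤ 1 + exp y := by linarith

theorem exp_half_mul_logit_flow_le {a : ℝ} (ha : 0 ≤ a) (y : ℝ) :
    exp (y / 2) * (2 * a * y / (1 + exp y) / 2) ≤ a := by
  have hden : 0 < 1 + exp y := by positivity
  rw [show exp (y / 2) * (2 * a * y / (1 + exp y) / 2) = a * (y * exp (y / 2)) / (1 + exp y) by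
    field_simp, div_le_iff₀ hden]
  exact mul_le_mul_of_nonneg_left (mul_exp_half_le_one_add_exp y) ha

/-- The logit of a ReLU network trained with cross-entropy (degenerate case) is strictly
increasing and grows at most logarithmically. -/
theorem stmt_1 (a : ℝ) (ha : 0 < a) (u : ℝ → ℝ) (u₀ : ℝ) (hu₀ : u 0 = u₀) (hpos : 0 < u₀)
    (hode : ∀ t ≥ (0:ℝ), HasDerivAt u (2 * a * u t / (1 + Real.exp (u t))) t) :
    StrictMonoOn u (Set.Ici 0) ∧
      ∀ t ≥ (0:ℝ), u t ≤ 2 * Real.log (a * t + Real.exp (u₀ / 2)) := by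
  have hu_ge : ∀ t ≥ (0:ℝ), u₀ ≤ u t :=
    le_on_Ici_of_hasDerivAt_lt_of_eq (fun t _ => hasDerivAt_const t u₀) hode hu₀.ge
      fun t _ heq => by rw [← heq]; positivity
  refine ⟨strictMonoOn_of_deriv_pos (convex_Ici 0)
    (fun t ht => (hode t ht).continuousAt.continuousWithinAt) fun t ht => ?_, fun t ht => ?_⟩
  · rw [interior_Ici] at ht
    have hut : 0 < u t := hpos.trans_le (hu_ge t ht.le)
    rw [(hode t ht.le).deriv]
    positivity
  · have hexp : exp (u t / 2) ≤ a * t + exp (u₀ / 2) :=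
      le_on_Ici_of_hasDerivAt_le (fun s hs => ((hode s hs).div_const 2).exp)
        (fun s _ => ((hasDerivAt_id s).const_mul a).add_const _) (by simp [hu₀])
        (fun s _ => by simpa using exp_half_mul_logit_flow_le ha.le (u s)) t ht
    have := (le_log_iff_exp_le ((exp_pos _).trans_le hexp)).2 hexp
    linarith
end

section
/- Let a > 0 and let u : ℝ → ℝ be differentiable with u(0) = u₀ > 0 and u'(t) = 2a·u(t)/(1 + exp(u(t))) for all t ≥ 0. Then for all t ≥ 0, u(t) ≥ u₀ and u(t) tends to +∞ as t → ∞. -/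
/-!
Along the flow `u' = 2 a u / (1 + exp u)` the right-hand side is positive wherever `u > 0`,
so the level `u₀` acts as a barrier that `u` can never cross downwards, and `u` is
nondecreasing. If `u` stayed below some `M`, then on `[u₀, M]` the right-hand side is at least
`δ = 2 a u₀ / (1 + exp M) > 0`, forcing `u t ≥ u₀ + δ t`, which eventually exceeds `M`.
-/

open Set Filter

section DerivBounds

variable {u u' : ℝ → ℝ} {a : ℝ}

theorem le_of_hasDerivAt_pos_of_eq {c : ℝ} (hu : ∀ t ≥ a, HasDerivAt u (u' t) t)
    (hc : c ≤ u a) (hbarrier : ∀ t ≥ a, u t = c → 0 < u' t) {t : ℝ} (ht : a ≤ t) :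
    c ≤ u t :=
  image_le_of_deriv_right_lt_deriv_boundary' (f := fun _ => c) (f' := fun _ => 0)
    continuousOn_const (fun _ _ => hasDerivWithinAt_const _ _ c) hc
    (fun s hs => (hu s hs.1).continuousAt.continuousWithinAt)
    (fun s hs => (hu s hs.1).hasDerivWithinAt)
    (fun s hs hs_eq => hbarrier s hs.1 hs_eq.symm) ⟨ht, le_rfl⟩

theorem add_mul_sub_le_of_le_hasDerivAt {δ : ℝ} (hu : ∀ t ≥ a, HasDerivAt u (u' t) t)
    (hδ : ∀ t ≥ a, δ ≤ u' t) {t : ℝ} (ht : a ≤ t) : u a + δ * (t - a) ≤ u t := by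
  have hline : ∀ s, HasDerivAt (fun s => u a + δ * (s - a)) δ s := fun s => by
    simpa using ((hasDerivAt_id s).sub_const a).const_mul δ |>.const_add (u a)
  exact image_le_of_deriv_right_le_deriv_boundary
    (fun s _ => (hline s).continuousAt.continuousWithinAt)
    (fun s _ => (hline s).hasDerivWithinAt) (by simp)
    (fun s hs => (hu s hs.1).continuousAt.continuousWithinAt)
    (fun s hs => (hu s hs.1).hasDerivWithinAt) (fun s hs => hδ s hs.1) ⟨ht, le_rfl⟩

theorem monotoneOn_Ici_of_hasDerivAt_nonneg (hu : ∀ t ≥ a, HasDerivAt u (u' t) t)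
    (hu' : ∀ t ≥ a, 0 ≤ u' t) : MonotoneOn u (Ici a) := fun s hs t _ hst => by
  simpa using add_mul_sub_le_of_le_hasDerivAt (a := s) (δ := 0)
    (fun r hr => hu r (le_trans hs hr)) (fun r hr => hu' r (le_trans hs hr)) hst

end DerivBounds

theorem tendsto_atTop_of_monotoneOn_Ici {u : ℝ → ℝ} {a : ℝ} (hmono : MonotoneOn u (Ici a))
    (hunbdd : ∀ M, ∃ t ≥ a, M ≤ u t) : Tendsto u atTop atTop := by
  refine tendsto_atTop_atTop.2 fun M => ?_
  obtain ⟨t₀, ht₀, hM⟩ := hunbdd M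
  exact ⟨t₀, fun t ht => hM.trans (hmono ht₀ (ht₀.trans ht) ht)⟩

/-- The logit under cross-entropy gradient flow (degenerate case) stays above its
initial value and diverges to `+∞`. -/
theorem stmt_3 (a : ℝ) (ha : 0 < a) (u : ℝ → ℝ) (u₀ : ℝ) (hu₀ : u 0 = u₀) (hpos : 0 < u₀)
    (hode : ∀ t ≥ (0:ℝ), HasDerivAt u (2 * a * u t / (1 + Real.exp (u t))) t) :
    (∀ t ≥ (0:ℝ), u t ≥ u₀) ∧ Filter.Tendsto u Filter.atTop Filter.atTop := by
  have hge : ∀ t ≥ (0:ℝ), u₀ ≤ u t := fun t ht =>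
    le_of_hasDerivAt_pos_of_eq hode hu₀.ge (fun s _ hs => by rw [hs]; positivity) ht
  have hmono : MonotoneOn u (Ici 0) := monotoneOn_Ici_of_hasDerivAt_nonneg hode fun t ht =>
    div_nonneg (mul_nonneg (by positivity) (hpos.le.trans (hge t ht))) (by positivity)
  have hunbdd : ∀ M, ∃ t ≥ (0:ℝ), M ≤ u t := by
    intro M
    by_contra! hbdd
    set δ := 2 * a * u₀ / (1 + Real.exp M)
    have hδ : 0 < δ := by positivity
    have hderiv : ∀ t ≥ (0:ℝ), δ ≤ 2 * a * u t / (1 + Real.exp (u t)) := fun t ht =>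
      div_le_div₀ (by nlinarith [hge t ht]) (by nlinarith [hge t ht]) (by positivity)
        (by simpa using (hbdd t ht).le)
    have hM : 0 ≤ M / δ := div_nonneg (by linarith [hu₀ ▸ hbdd 0 le_rfl]) hδ.le
    have hgrowth := add_mul_sub_le_of_le_hasDerivAt hode hderiv hM
    rw [sub_zero, mul_div_cancel₀ _ hδ.ne', hu₀] at hgrowth
    linarith [hbdd _ hM]
  exact ⟨hge, tendsto_atTop_of_monotoneOn_Ici hmono hunbdd⟩
end

section
/- Let a > 0 and let u : ℝ → ℝ be differentiable with u(0) = u₀ < 0 and u'(t) = −2a·u(t)/(1 + exp(u(t))) for all t ≥ 0. Then u is strictly increasing, u(t) < 0 for all t ≥ 0, and u(t) → 0 as t → ∞. -/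
/-!
While `u ≤ 0` the drift satisfies `-a u ≤ u' ≤ -2a u` (because `1 ≤ 1 + exp u ≤ 2`), so
`u(t) e^{2at}` is nonincreasing and `u(t) e^{at}` is nondecreasing. The first bound forbids a
first time at which `u` reaches `0`, since there `0 = u e^{2at} ≤ u₀ < 0`; hence
`u₀ e^{-at} ≤ u(t) ≤ u₀ e^{-2at} < 0` for all `t ≥ 0`. Then `u' > 0`, and `u → 0` by squeezing.
-/

open Real Set Filter Topology

/-- Real induction: a least time in `[t₀, T]` with `0 ≤ u` would contradict `h`. -/
theorem forall_neg_of_continuousOn_Ici {u : ℝ → ℝ} {t₀ : ℝ} (hu : ContinuousOn u (Ici t₀))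
    (h : ∀ t ≥ t₀, (∀ s ∈ Ico t₀ t, u s < 0) → u t < 0) : ∀ t ≥ t₀, u t < 0 := by
  by_contra! ⟨T, hT, huT⟩
  have hK : IsCompact (Icc t₀ T ∩ u ⁻¹' Ici 0) :=
    isCompact_Icc.of_isClosed_subset ((hu.mono Icc_subset_Ici_self).preimage_isClosed_of_isClosed
      isClosed_Icc isClosed_Ici) inter_subset_left
  obtain ⟨t₁, ⟨ht₁, hut₁⟩, hmin⟩ := hK.exists_isLeast ⟨T, ⟨hT, le_rfl⟩, huT⟩
  refine (h t₁ ht₁.1 fun s hs => ?_).not_ge hut₁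
  by_contra! hus
  exact (hmin ⟨⟨hs.1, hs.2.le.trans ht₁.2⟩, hus⟩).not_gt hs.2

theorem hasDerivAt_mul_exp_mul {u : ℝ → ℝ} {u' c t : ℝ} (hu : HasDerivAt u u' t) :
    HasDerivAt (fun s => u s * exp (c * s)) ((u' + c * u t) * exp (c * t)) t :=
  (hu.mul ((hasDerivAt_id' t).const_mul c).exp).congr_deriv (by ring)

theorem mul_exp_le_of_hasDerivAt {u u' : ℝ → ℝ} {c T : ℝ} (hT : 0 ≤ T)
    (hu : ∀ t ∈ Icc 0 T, HasDerivAt u (u' t) t) (hle : ∀ t ∈ Ioo 0 T, u' t + c * u t ≤ 0) :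
    u T * exp (c * T) ≤ u 0 := by
  have hw := fun t ht => hasDerivAt_mul_exp_mul (c := c) (hu t ht)
  have hanti : AntitoneOn (fun s => u s * exp (c * s)) (Icc 0 T) := by
    refine antitoneOn_of_hasDerivWithinAt_nonpos (convex_Icc 0 T)
      (fun t ht => (hw t ht).continuousAt.continuousWithinAt)
      (fun t ht => (hw t (interior_subset ht)).hasDerivWithinAt) fun t ht => ?_
    rw [interior_Icc] at ht
    exact mul_nonpos_of_nonpos_of_nonneg (hle t ht) (exp_pos _).le
  simpa using hanti (left_mem_Icc.2 hT) (right_mem_Icc.2 hT) hT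

theorem le_mul_exp_of_hasDerivAt {u u' : ℝ → ℝ} {c T : ℝ} (hT : 0 ≤ T)
    (hu : ∀ t ∈ Icc 0 T, HasDerivAt u (u' t) t) (hge : ∀ t ∈ Ioo 0 T, 0 ≤ u' t + c * u t) :
    u 0 ≤ u T * exp (c * T) := by
  have := mul_exp_le_of_hasDerivAt (u := -u) (u' := -u') (c := c) hT (fun t ht => (hu t ht).neg)
    fun t ht => by simp only [Pi.neg_apply]; linarith [hge t ht]
  simp only [Pi.neg_apply, neg_mul] at this
  linarith

/-- The velocity field of the logit `u = z y`. -/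
noncomputable def logitDrift (a x : ℝ) : ℝ := -(2 * a * x) / (1 + exp x)

section logitDrift

variable {a x : ℝ}

theorem logitDrift_pos (ha : 0 < a) (hx : x < 0) : 0 < logitDrift a x :=
  div_pos (by nlinarith) (by positivity)

theorem logitDrift_add_two_mul_nonpos (ha : 0 ≤ a) (hx : x ≤ 0) :
    logitDrift a x + 2 * a * x ≤ 0 := by
  have hd : 0 < 1 + exp x := by positivity
  rw [logitDrift, div_add' _ _ _ hd.ne']
  refine div_nonpos_of_nonpos_of_nonneg ?_ hd.le
  nlinarith [mul_nonpos_of_nonneg_of_nonpos (mul_nonneg ha (exp_pos x).le) hx]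

theorem logitDrift_add_mul_nonneg (ha : 0 ≤ a) (hx : x ≤ 0) : 0 ≤ logitDrift a x + a * x := by
  have hd : 0 < 1 + exp x := by positivity
  rw [logitDrift, div_add' _ _ _ hd.ne']
  refine div_nonneg ?_ hd.le
  nlinarith [mul_nonneg ha (mul_nonneg_of_nonpos_of_nonpos hx (sub_nonpos.2 (exp_le_one_iff.2 hx)))]

end logitDrift

/-- Top-left quadrant initialization: the negative logit strictly increases, stays
negative, and converges to `0` without ever reaching it. -/
theorem stmt_4 (a : ℝ) (ha : 0 < a) (u : ℝ → ℝ) (u₀ : ℝ) (hu₀ : u 0 = u₀) (hneg : u₀ < 0)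
    (hode : ∀ t ≥ (0:ℝ), HasDerivAt u (-(2 * a * u t) / (1 + Real.exp (u t))) t) :
    StrictMonoOn u (Set.Ici 0) ∧ (∀ t ≥ (0:ℝ), u t < 0) ∧
      Filter.Tendsto u Filter.atTop (nhds 0) := by
  subst hu₀
  have hode' : ∀ t ∈ Ici (0 : ℝ), HasDerivAt u (logitDrift a (u t)) t := hode
  have hcont : ContinuousOn u (Ici 0) := fun t ht => (hode' t ht).continuousAt.continuousWithinAt
  have hlt : ∀ t ≥ 0, u t < 0 := by
    refine forall_neg_of_continuousOn_Ici hcont fun t ht hprev => ?_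
    have hupper : u t * exp (2 * a * t) ≤ u 0 :=
      mul_exp_le_of_hasDerivAt ht (fun s hs => hode' s hs.1)
        fun s hs => logitDrift_add_two_mul_nonpos ha.le (hprev s (Ioo_subset_Ico_self hs)).le
    exact neg_of_mul_neg_left (hupper.trans_lt hneg) (exp_pos _).le
  have hlower : ∀ t ≥ 0, u 0 * exp (-(a * t)) ≤ u t := fun t ht => by
    rw [exp_neg, ← div_eq_mul_inv, div_le_iff₀ (exp_pos _)]
    exact le_mul_exp_of_hasDerivAt ht (fun s hs => hode' s hs.1)
      fun s hs => logitDrift_add_mul_nonneg ha.le (hlt s hs.1.le).le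
  have hdecay : Tendsto (fun t => u 0 * exp (-(a * t))) atTop (𝓝 0) := by
    simpa using (tendsto_exp_neg_atTop_nhds_zero.comp (tendsto_id.const_mul_atTop ha)).const_mul (u 0)
  refine ⟨strictMonoOn_of_hasDerivWithinAt_pos (convex_Ici 0) hcont
    (fun t ht => (hode' t (interior_subset ht)).hasDerivWithinAt)
    (fun t ht => logitDrift_pos ha (hlt t (interior_subset ht))), hlt, ?_⟩
  exact tendsto_of_tendsto_of_tendsto_of_le_of_le' hdecay tendsto_const_nhds
    ((eventually_ge_atTop 0).mono hlower) ((eventually_ge_atTop 0).mono fun t ht => (hlt t ht).le)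
end

section
/- Let a > 0, u₀ < u_f < 0, and let u : ℝ → ℝ satisfy u(0) = u₀ and u'(t) = −2a·u(t)/(1 + exp(u(t))) for t ≥ 0. If t* is a time with u(t*) = u_f, then t* ≥ (1/(2a))·(log(−u₀) − log(−u_f)). -/
/-!
Run the flow backwards from `t*`: since `1 + exp u ≥ 1`, the reversed trajectory satisfies
`|v'| ≤ 2a |v|`, so Grönwall's inequality gives `|u₀| ≤ |u_f| exp (2a t*)`; taking logarithms
yields the bound. Comparing magnitudes instead of following `log (-u)` forward avoids having to
show that `u` stays negative.
-/

open Real Set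

theorem norm_le_norm_mul_exp_of_norm_deriv_le {E : Type*} [NormedAddCommGroup E]
    [NormedSpace ℝ E] {f f' : ℝ → E} {K a b : ℝ} (hab : a ≤ b)
    (hf : ∀ t ∈ Icc a b, HasDerivAt f (f' t) t) (bound : ∀ t ∈ Icc a b, ‖f' t‖ ≤ K * ‖f t‖) :
    ‖f a‖ ≤ ‖f b‖ * exp (K * (b - a)) := by
  have hmem : ∀ s ∈ Icc 0 (b - a), b - s ∈ Icc a b := fun s hs =>
    ⟨by linarith [hs.2], by linarith [hs.1]⟩
  have hrev : ∀ s ∈ Icc 0 (b - a), HasDerivAt (fun s => f (b - s)) (-f' (b - s)) s :=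
    fun s hs => (hf _ (hmem s hs)).comp_const_sub b s
  have key := norm_le_gronwallBound_of_norm_deriv_right_le (ε := 0)
    (fun s hs => (hrev s hs).continuousAt.continuousWithinAt)
    (fun s hs => (hrev s (Ico_subset_Icc_self hs)).hasDerivWithinAt) le_rfl
    (fun s hs => by simpa using bound _ (hmem s (Ico_subset_Icc_self hs)))
    (b - a) ⟨sub_nonneg.2 hab, le_rfl⟩
  simpa [gronwallBound_ε0] using key

theorem abs_div_one_add_exp_le (x y : ℝ) : |y / (1 + exp x)| ≤ |y| := by
  rw [abs_div, abs_of_pos (by positivity : 0 < 1 + exp x)]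
  exact div_le_self (abs_nonneg y) (by linarith [exp_pos x])

/-- Quantitative frozen-learning regime: the time to move the negative logit from
`u₀` to `u_f` is at least `(1/(2a))·(log(−u₀) − log(−u_f))`. -/
theorem stmt_5 (a : ℝ) (ha : 0 < a) (u₀ uf : ℝ) (h0 : u₀ < uf) (hf : uf < 0)
    (u : ℝ → ℝ) (hu₀ : u 0 = u₀)
    (hode : ∀ t ≥ (0:ℝ), HasDerivAt u (-(2 * a * u t) / (1 + Real.exp (u t))) t)
    (tstar : ℝ) (htstar : 0 ≤ tstar) (hreach : u tstar = uf) :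
    tstar ≥ (1 / (2 * a)) * (Real.log (-u₀) - Real.log (-uf)) := by
  have hgrowth : ∀ t ∈ Icc 0 tstar,
      |-(2 * a * u t) / (1 + exp (u t))| ≤ 2 * a * |u t| := fun t _ => by
    simpa [abs_mul, abs_of_pos ha] using abs_div_one_add_exp_le (u t) (-(2 * a * u t))
  have hdecay : -u₀ ≤ -uf * exp (2 * a * tstar) := by
    have := norm_le_norm_mul_exp_of_norm_deriv_le htstar (fun t ht => hode t ht.1) hgrowth
    rwa [hu₀, hreach, sub_zero, Real.norm_eq_abs, Real.norm_eq_abs,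
      abs_of_neg (h0.trans hf), abs_of_neg hf] at this
  have hlog : log (-u₀) ≤ log (-uf) + 2 * a * tstar := by
    rw [← log_exp (2 * a * tstar), ← log_mul (neg_ne_zero.2 hf.ne) (exp_ne_zero _)]
    exact log_le_log (by linarith) hdecay
  rw [ge_iff_le, one_div, inv_mul_le_iff₀ (by positivity)]
  linarith
end

section
/- Let a > 0 and let y, z : ℝ → ℝ be differentiable with y'(t) = a²·z(t) and z'(t) = y(t) for all t, with initial conditions satisfying y(0) = a·z(0) > 0. Then u(t) := y(t)·z(t) satisfies u(t) = u(0)·exp(2a·t) for all t ≥ 0. -/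
/-!
On the line `y = a z` the system reduces to `z' = a z`, so `y z = a z²` grows like `exp (2 a t)`.
The line is invariant: `w = y - a z` solves `w' = -a w` with `w 0 = 0`, hence vanishes.
-/

open Real

theorem eq_mul_exp_of_hasDerivAt_mul_self {f : ℝ → ℝ} {c : ℝ}
    (hf : ∀ t, HasDerivAt f (c * f t) t) (t : ℝ) : f t = f 0 * exp (c * t) := by
  have hg : ∀ s, HasDerivAt (fun s => f s * exp (-(c * s))) 0 s := fun s => by
    have hexp : HasDerivAt (fun s => exp (-(c * s))) (exp (-(c * s)) * -c) s := by
      simpa using (((hasDerivAt_id s).const_mul c).neg).exp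
    exact ((hf s).mul hexp).congr_deriv (by ring)
  have hconst := is_const_of_deriv_eq_zero (fun s => (hg s).differentiableAt)
    (fun s => (hg s).deriv) t 0
  simp only [mul_zero, neg_zero, exp_zero, mul_one] at hconst
  rw [← hconst, mul_assoc, ← exp_add, neg_add_cancel, exp_zero, mul_one]

theorem stmt_6_general (a : ℝ) (y z : ℝ → ℝ)
    (hy : ∀ t : ℝ, HasDerivAt y (a ^ 2 * z t) t)
    (hz : ∀ t : ℝ, HasDerivAt z (y t) t)
    (hinit : y 0 = a * z 0) :
    ∀ t ≥ (0:ℝ), y t * z t = (y 0 * z 0) * Real.exp (2 * a * t) := by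
  have hy_eq : ∀ t, y t = a * z t := by
    have hw : ∀ t, HasDerivAt (fun t => y t - a * z t) (-a * (y t - a * z t)) t := fun t =>
      ((hy t).sub ((hz t).const_mul a)).congr_deriv (by ring)
    intro t
    have := eq_mul_exp_of_hasDerivAt_mul_self hw t
    rw [hinit, sub_self, zero_mul] at this
    linarith
  have hz_eq : ∀ t, z t = z 0 * exp (a * t) :=
    eq_mul_exp_of_hasDerivAt_mul_self fun t => hy_eq t ▸ hz t
  intro t _
  rw [hy_eq t, hz_eq t, hinit, show 2 * a * t = a * t + a * t by ring, exp_add]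
  ring

/-- Hinge-loss dynamics, degenerate case: the logit grows exactly exponentially. -/
theorem stmt_6 (a : ℝ) (ha : 0 < a) (y z : ℝ → ℝ)
    (hy : ∀ t : ℝ, HasDerivAt y (a ^ 2 * z t) t)
    (hz : ∀ t : ℝ, HasDerivAt z (y t) t)
    (hinit : y 0 = a * z 0) (hpos : 0 < y 0) :
    ∀ t ≥ (0:ℝ), y t * z t = (y 0 * z 0) * Real.exp (2 * a * t) :=
  stmt_6_general a y z hy hz hinit
end

section
/- Let a > 0 and let y, z : ℝ → ℝ be differentiable with y'(t) = a²·z(t) and z'(t) = y(t), and suppose c := y(0)² − a²·z(0)² > 0 with y(0) > 0. Then for all t ≥ 0, y(t) = √c·cosh(θ₀/2 + a·t) and z(t) = (√c/a)·sinh(θ₀/2 + a·t), where θ₀ is the unique real number with √c·cosh(θ₀/2) = y(0) and (√c/a)·sinh(θ₀/2) = z(0). Consequently u(t) := y(t)·z(t) = (c/(2a))·sinh(θ₀ + 2a·t). -/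
/-!
Writing `u = y + a z` and `v = y - a z` decouples the system into `u' = a u` and `v' = -a v`,
so `u` and `v` are multiples of `exp (a t)` and `exp (-a t)`; recombining gives
`y t = y 0 cosh (a t) + a z 0 sinh (a t)` and `z t = z 0 cosh (a t) + y 0 / a sinh (a t)`.
For the initial data `(√c cosh (θ₀/2), √c/a sinh (θ₀/2))` the addition formulas turn these
into `√c cosh (θ₀/2 + a t)` and `√c/a sinh (θ₀/2 + a t)`, and the double-angle formula for
`sinh` gives the product.
-/

open Real

theorem eq_mul_exp_of_hasDerivAt_const_mul {k : ℝ} {f : ℝ → ℝ}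
    (hf : ∀ t, HasDerivAt f (k * f t) t) (t : ℝ) : f t = f 0 * exp (k * t) := by
  have hg : ∀ s, HasDerivAt (fun s => f s * exp (-k * s)) 0 s := fun s => by
    have he : HasDerivAt (fun s => exp (-k * s)) (exp (-k * s) * -k) s :=
      ((hasDerivAt_id s).const_mul (-k)).exp.congr_deriv (by simp)
    exact ((hf s).mul he).congr_deriv (by ring)
  have hconst : f t * exp (-k * t) = f 0 * exp (-k * 0) :=
    is_const_of_deriv_eq_zero (fun s => (hg s).differentiableAt) (fun s => (hg s).deriv) t 0
  calc f t = f t * exp (-k * t) * exp (k * t) := by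
        rw [mul_assoc, ← exp_add]; simp
    _ = f 0 * exp (k * t) := by rw [hconst]; simp

section HyperbolicSystem

variable {a : ℝ} {y z : ℝ → ℝ} (hy : ∀ t, HasDerivAt y (a ^ 2 * z t) t)
  (hz : ∀ t, HasDerivAt z (y t) t)
include hy hz

theorem add_mul_eq_mul_exp (t : ℝ) : y t + a * z t = (y 0 + a * z 0) * exp (a * t) :=
  eq_mul_exp_of_hasDerivAt_const_mul
    (fun s => ((hy s).add ((hz s).const_mul a)).congr_deriv (by simp only [Pi.add_apply]; ring))
    t

theorem sub_mul_eq_mul_exp (t : ℝ) : y t - a * z t = (y 0 - a * z 0) * exp (-a * t) :=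
  eq_mul_exp_of_hasDerivAt_const_mul
    (fun s => ((hy s).sub ((hz s).const_mul a)).congr_deriv (by simp only [Pi.sub_apply]; ring))
    t

theorem fst_eq_cosh_sinh (t : ℝ) :
    y t = y 0 * cosh (a * t) + a * z 0 * sinh (a * t) := by
  have hu := add_mul_eq_mul_exp hy hz t
  have hv := sub_mul_eq_mul_exp hy hz t
  rw [neg_mul] at hv
  rw [cosh_eq, sinh_eq]
  linear_combination (hu + hv) / 2

theorem snd_eq_cosh_sinh (ha : a ≠ 0) (t : ℝ) :
    z t = z 0 * cosh (a * t) + y 0 / a * sinh (a * t) := by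
  have hu := add_mul_eq_mul_exp hy hz t
  have hv := sub_mul_eq_mul_exp hy hz t
  rw [neg_mul] at hv
  rw [cosh_eq, sinh_eq]
  field_simp
  linear_combination hu - hv

end HyperbolicSystem

theorem stmt_7_general (a : ℝ) (ha : 0 < a) (y z : ℝ → ℝ)
    (hy : ∀ t : ℝ, HasDerivAt y (a ^ 2 * z t) t)
    (hz : ∀ t : ℝ, HasDerivAt z (y t) t)
    (c : ℝ) (hcpos : 0 < c)
    (θ₀ : ℝ) (hθy : Real.sqrt c * Real.cosh (θ₀ / 2) = y 0)
    (hθz : Real.sqrt c / a * Real.sinh (θ₀ / 2) = z 0) :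
    ∀ t ≥ (0:ℝ),
      y t = Real.sqrt c * Real.cosh (θ₀ / 2 + a * t) ∧
      z t = Real.sqrt c / a * Real.sinh (θ₀ / 2 + a * t) ∧
      y t * z t = c / (2 * a) * Real.sinh (θ₀ + 2 * a * t) := by
  intro t _
  have hyt : y t = √c * cosh (θ₀ / 2 + a * t) := by
    rw [fst_eq_cosh_sinh hy hz, cosh_add, ← hθy, ← hθz]
    field_simp
  have hzt : z t = √c / a * sinh (θ₀ / 2 + a * t) := by
    rw [snd_eq_cosh_sinh hy hz ha.ne', sinh_add, ← hθy, ← hθz]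
    field_simp
  refine ⟨hyt, hzt, ?_⟩
  rw [hyt, hzt, show θ₀ + 2 * a * t = 2 * (θ₀ / 2 + a * t) by ring, sinh_two_mul]
  linear_combination sinh (θ₀ / 2 + a * t) * cosh (θ₀ / 2 + a * t) / a * sq_sqrt hcpos.le

/-- Hinge-loss dynamics, non-degenerate hyperbolic case: closed-form solution via
hyperbolic functions. -/
theorem stmt_7 (a : ℝ) (ha : 0 < a) (y z : ℝ → ℝ)
    (hy : ∀ t : ℝ, HasDerivAt y (a ^ 2 * z t) t)
    (hz : ∀ t : ℝ, HasDerivAt z (y t) t)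
    (c : ℝ) (hc : c = y 0 ^ 2 - a ^ 2 * z 0 ^ 2) (hcpos : 0 < c) (hy0 : 0 < y 0)
    (θ₀ : ℝ) (hθy : Real.sqrt c * Real.cosh (θ₀ / 2) = y 0)
    (hθz : Real.sqrt c / a * Real.sinh (θ₀ / 2) = z 0) :
    ∀ t ≥ (0:ℝ),
      y t = Real.sqrt c * Real.cosh (θ₀ / 2 + a * t) ∧
      z t = Real.sqrt c / a * Real.sinh (θ₀ / 2 + a * t) ∧
      y t * z t = c / (2 * a) * Real.sinh (θ₀ + 2 * a * t) :=
  stmt_7_general a ha y z hy hz c hcpos θ₀ hθy hθz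
end

section
/- Let λ ∈ (0,1], z₀ > 0 and let z, α, β : ℝ → ℝ be differentiable nonnegative functions with β(0) > 0, α(0) ≥ β(0)/λ, satisfying for all t ≥ 0: α'(t) = λ·z(t)/(1 + exp(z(t)(α(t)+β(t)))) + (1−λ)·z(t)/(1 + exp(z(t)α(t))), β'(t) = λ·z(t)/(1 + exp(z(t)(α(t)+β(t)))), and z(t) > 0. Then for all t ≥ 0, α(t) ≥ β(t)/λ. -/
/-!
Put `f = λ α - β`. Along the flow, `f' = λ (1 - λ) (σ(α) - σ(α + β))` with
`σ(x) = z / (1 + exp (z x))`, which is antitone in `x` because `z > 0`; since `β ≥ 0`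
this makes `f` nondecreasing, and `f (0) ≥ 0` is the initial condition.
-/

open Real Set

theorem antitone_div_one_add_exp_mul {z : ℝ} (hz : 0 ≤ z) :
    Antitone fun x => z / (1 + exp (z * x)) := fun a b hab =>
  div_le_div_of_nonneg_left hz (by positivity) <|
    add_le_add_right (exp_le_exp.2 <| mul_le_mul_of_nonneg_left hab hz) 1

theorem monotoneOn_Ici_of_hasDerivAt_nonneg_s9 {f f' : ℝ → ℝ} {a : ℝ}
    (hf : ∀ t ≥ a, HasDerivAt f (f' t) t) (hf' : ∀ t > a, 0 ≤ f' t) :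
    MonotoneOn f (Ici a) := by
  refine monotoneOn_of_hasDerivWithinAt_nonneg (f' := f') (convex_Ici a)
    (fun t ht => (hf t ht).continuousAt.continuousWithinAt) (fun t ht => ?_) (fun t ht => ?_)
  · rw [interior_Ici] at ht
    exact (hf t ht.le).hasDerivWithinAt
  · rw [interior_Ici] at ht
    exact hf' t ht

theorem starvation_gap_deriv_nonneg {lam z a b : ℝ} (hlam : lam ∈ Icc (0 : ℝ) 1)
    (hz : 0 ≤ z) (hb : 0 ≤ b) :
    0 ≤ lam * (lam * z / (1 + exp (z * (a + b))) + (1 - lam) * z / (1 + exp (z * a)))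
      - lam * z / (1 + exp (z * (a + b))) := by
  have hσ : z / (1 + exp (z * (a + b))) ≤ z / (1 + exp (z * a)) :=
    antitone_div_one_add_exp_mul hz (le_add_of_nonneg_right hb)
  calc (0 : ℝ) ≤ lam * (1 - lam) * (z / (1 + exp (z * a)) - z / (1 + exp (z * (a + b)))) :=
        mul_nonneg (mul_nonneg hlam.1 (sub_nonneg.2 hlam.2)) (sub_nonneg.2 hσ)
    _ = _ := by ring

theorem stmt_9_general (lam : ℝ) (hlam : lam ∈ Set.Ioc (0:ℝ) 1)
    (z α β : ℝ → ℝ)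
    (hβnn : ∀ t ≥ (0:ℝ), 0 ≤ β t)
    (hαβ0 : α 0 ≥ β 0 / lam)
    (hα : ∀ t ≥ (0:ℝ), HasDerivAt α
      (lam * z t / (1 + Real.exp (z t * (α t + β t)))
        + (1 - lam) * z t / (1 + Real.exp (z t * α t))) t)
    (hβ : ∀ t ≥ (0:ℝ), HasDerivAt β
      (lam * z t / (1 + Real.exp (z t * (α t + β t)))) t)
    (hzpos : ∀ t ≥ (0:ℝ), 0 < z t) :
    ∀ t ≥ (0:ℝ), α t ≥ β t / lam := by
  have hgap : MonotoneOn (fun t => lam * α t - β t) (Ici 0) :=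
    monotoneOn_Ici_of_hasDerivAt_nonneg_s9 (fun t ht => ((hα t ht).const_mul lam).sub (hβ t ht))
      fun t ht => starvation_gap_deriv_nonneg (Ioc_subset_Icc_self hlam) (hzpos t ht.le).le
        (hβnn t ht.le)
  have hgap0 : β 0 ≤ lam * α 0 := by rwa [ge_iff_le, div_le_iff₀' hlam.1] at hαβ0
  intro t ht
  have := hgap self_mem_Ici ht ht
  rw [ge_iff_le, div_le_iff₀' hlam.1]
  linarith

/-- Gradient starvation dynamics: the frequent-feature coefficient `α` dominates the
rare-feature coefficient `β` rescaled by the frequency `λ` at all times. -/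
theorem stmt_9 (lam : ℝ) (hlam : lam ∈ Set.Ioc (0:ℝ) 1)
    (z α β : ℝ → ℝ) (hz0 : 0 < z 0)
    (hαd : Differentiable ℝ α) (hβd : Differentiable ℝ β) (hzd : Differentiable ℝ z)
    (hαnn : ∀ t ≥ (0:ℝ), 0 ≤ α t) (hβnn : ∀ t ≥ (0:ℝ), 0 ≤ β t)
    (hβ0 : 0 < β 0) (hαβ0 : α 0 ≥ β 0 / lam)
    (hα : ∀ t ≥ (0:ℝ), HasDerivAt α
      (lam * z t / (1 + Real.exp (z t * (α t + β t)))
        + (1 - lam) * z t / (1 + Real.exp (z t * α t))) t)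
    (hβ : ∀ t ≥ (0:ℝ), HasDerivAt β
      (lam * z t / (1 + Real.exp (z t * (α t + β t)))) t)
    (hzpos : ∀ t ≥ (0:ℝ), 0 < z t) :
    ∀ t ≥ (0:ℝ), α t ≥ β t / lam :=
  stmt_9_general lam hlam z α β hβnn hαβ0 hα hβ hzpos
end

section
/- Let a > 0 and u₀ > 0. The function t ↦ (1/(2a))·(log(u/u₀) + Ei(u) − Ei(u₀)), as a function of u on [u₀, ∞), is a strictly increasing bijection from [u₀, ∞) to [0, ∞), where Ei is the exponential integral. Its inverse u(t) solves u'(t) = 2a·u(t)/(1 + exp(u(t))) with u(0) = u₀. -/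
/-!
By the fundamental theorem of calculus `Ei' u = eᵘ / u` on `(0, ∞)`, so the time function
has derivative `(1 + eᵘ) / (2 a u) > 0` there. Since `Ei` is increasing, the time function
differs from `log (u / u₀) / (2 a)` by a term with the sign of `u - u₀`, so it is unbounded in
both directions and hence an increasing bijection `(0, ∞) → ℝ`. Its inverse is differentiable
with the reciprocal derivative `2 a u / (1 + eᵘ)`, which is the ODE.
-/

/-- The exponential integral `Ei(x)` for `x > 0` (principal value), via the
standard identity `Ei(x) = γ + log x + ∫₀ˣ (e^t − 1)/t dt`. -/
noncomputable def expInt (x : ℝ) : ℝ :=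
  Real.eulerMascheroniConstant + Real.log x + ∫ t in (0:ℝ)..x, (Real.exp t - 1) / t

open Real Set Filter MeasureTheory Function

theorem intervalIntegrable_exp_sub_one_div (a b : ℝ) :
    IntervalIntegrable (fun t => (exp t - 1) / t) volume a b := by
  have hcont : Continuous (dslope exp 0) := continuous_iff_continuousAt.2 fun t => by
    rcases eq_or_ne t 0 with rfl | ht
    · exact continuousAt_dslope_same.2 differentiableAt_exp
    · exact (continuousAt_dslope_of_ne ht).2 continuous_exp.continuousAt
  refine (hcont.intervalIntegrable a b).congr_ae ?_
  filter_upwards [ae_restrict_of_ae (Measure.ae_ne volume 0)] with t ht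
  rw [dslope_of_ne _ ht, slope_def_field, exp_zero, sub_zero]

theorem hasDerivAt_expInt {x : ℝ} (hx : 0 < x) : HasDerivAt expInt (exp x / x) x := by
  have hcont : ContinuousAt (fun t => (exp t - 1) / t) x := by fun_prop (disch := exact hx.ne')
  have hmeas : Measurable fun t => (exp t - 1) / t := by fun_prop
  have hint := intervalIntegral.integral_hasDerivAt_right (intervalIntegrable_exp_sub_one_div 0 x)
    hmeas.stronglyMeasurable.stronglyMeasurableAtFilter hcont
  rw [show exp x / x = x⁻¹ + (exp x - 1) / x by field_simp; ring]
  exact ((hasDerivAt_log hx.ne').const_add eulerMascheroniConstant).add hint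

theorem strictMonoOn_expInt : StrictMonoOn expInt (Ioi 0) :=
  strictMonoOn_of_hasDerivWithinAt_pos (convex_Ioi 0)
    (fun x hx => (hasDerivAt_expInt hx).continuousAt.continuousWithinAt)
    (fun x hx => (hasDerivAt_expInt (interior_subset hx : 0 < x)).hasDerivWithinAt)
    (fun x hx => by have : 0 < x := interior_subset hx; positivity)

theorem exists_hasDerivAt_inverse {f f' : ℝ → ℝ} {s : Set ℝ} (hs : IsOpen s)
    (hmono : StrictMonoOn f s) (hsurj : SurjOn f s univ)
    (hf : ∀ x ∈ s, HasDerivAt f (f' x) x) (hf' : ∀ x ∈ s, f' x ≠ 0) :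
    ∃ g : ℝ → ℝ, (∀ x ∈ s, g (f x) = x) ∧
      ∀ y, g y ∈ s ∧ HasDerivAt g (f' (g y))⁻¹ y := by
  set g := invFunOn f s
  have hg_mem (y : ℝ) : g y ∈ s := invFunOn_mem (hsurj (mem_univ y))
  have hfg (y : ℝ) : f (g y) = y := invFunOn_eq (hsurj (mem_univ y))
  have hgf (x : ℝ) (hx : x ∈ s) : g (f x) = x := hmono.injOn.leftInvOn_invFunOn hx
  have hg_mono : Monotone g := fun y₁ y₂ h =>
    (hmono.le_iff_le (hg_mem y₁) (hg_mem y₂)).1 (by rwa [hfg, hfg])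
  have hg_range : range g = s :=
    (range_subset_iff.2 hg_mem).antisymm fun x hx => ⟨f x, hgf x hx⟩
  refine ⟨g, hgf, fun y => ⟨hg_mem y, ?_⟩⟩
  have hg_cont : ContinuousAt g y :=
    continuousAt_of_monotoneOn_of_image_mem_nhds (hg_mono.monotoneOn univ) univ_mem
      (by rw [image_univ, hg_range]; exact hs.mem_nhds (hg_mem y))
  exact HasDerivAt.of_local_left_inverse hg_cont (hf _ (hg_mem y)) (hf' _ (hg_mem y))
    (Eventually.of_forall hfg)

theorem StrictMonoOn.bijOn_Ici {α β : Type*} [LinearOrder α] [Preorder β] {f : α → β}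
    {s : Set α} {x : α} (hf : StrictMonoOn f s) (hxs : Ici x ⊆ s)
    (hsurj : SurjOn f s (Ici (f x))) : BijOn f (Ici x) (Ici (f x)) := by
  have hx : x ∈ s := hxs self_mem_Ici
  refine ⟨fun y hy => hf.monotoneOn hx (hxs hy) hy, hf.injOn.mono hxs, fun z hz => ?_⟩
  obtain ⟨y, hy, rfl⟩ := hsurj hz
  exact ⟨y, (hf.le_iff_le hx hy).1 hz, rfl⟩

noncomputable def logitTime (a u₀ u : ℝ) : ℝ :=
  1 / (2 * a) * (log (u / u₀) + expInt u - expInt u₀)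

theorem logitTime_self (a u₀ : ℝ) : logitTime a u₀ u₀ = 0 := by
  simp [logitTime]

theorem hasDerivAt_logitTime (a : ℝ) {u₀ u : ℝ} (hu₀ : u₀ ≠ 0) (hu : 0 < u) :
    HasDerivAt (logitTime a u₀) (1 / (2 * a) * ((1 + exp u) / u)) u := by
  have hlog := ((hasDerivAt_id' u).div_const u₀).log (div_ne_zero hu.ne' hu₀)
  rw [show (1 + exp u) / u = 1 / u₀ / (u / u₀) + exp u / u by field_simp]
  exact (((hlog.add (hasDerivAt_expInt hu)).sub_const (expInt u₀)).const_mul (1 / (2 * a)))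

theorem strictMonoOn_logitTime {a u₀ : ℝ} (ha : 0 < a) (hu₀ : u₀ ≠ 0) :
    StrictMonoOn (logitTime a u₀) (Ioi 0) :=
  strictMonoOn_of_hasDerivWithinAt_pos (convex_Ioi 0)
    (fun x hx => (hasDerivAt_logitTime a hu₀ hx).continuousAt.continuousWithinAt)
    (fun x hx => (hasDerivAt_logitTime a hu₀ (interior_subset hx : 0 < x)).hasDerivWithinAt)
    (fun x hx => by have : 0 < x := interior_subset hx; positivity)

theorem surjOn_logitTime {a u₀ : ℝ} (ha : 0 < a) (hu₀ : 0 < u₀) :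
    SurjOn (logitTime a u₀) (Ioi 0) univ := by
  intro y _
  -- `log (w / u₀) = 2 a y`, and the `Ei` part of `logitTime a u₀ w` then has the sign of `y`.
  set w := u₀ * exp (2 * a * y)
  have hw : 0 < w := by positivity
  have hτw : logitTime a u₀ w = y + (expInt w - expInt u₀) / (2 * a) := by
    simp only [logitTime, w, mul_div_cancel_left₀ _ hu₀.ne', log_exp]
    field_simp
    ring
  have hy : y ∈ uIcc (logitTime a u₀ u₀) (logitTime a u₀ w) := by
    rw [logitTime_self, hτw, mem_uIcc]
    rcases le_total 0 y with hy | hy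
    · have hu₀w : u₀ ≤ w := le_mul_of_one_le_right hu₀.le (one_le_exp (by positivity))
      have := strictMonoOn_expInt.monotoneOn hu₀ hw hu₀w
      have : 0 ≤ (expInt w - expInt u₀) / (2 * a) := by
        apply div_nonneg <;> linarith
      left; constructor <;> linarith
    · have hwu₀ : w ≤ u₀ := mul_le_of_le_one_right hu₀.le (exp_le_one_iff.2 (by nlinarith))
      have := strictMonoOn_expInt.monotoneOn hw hu₀ hwu₀
      have : (expInt w - expInt u₀) / (2 * a) ≤ 0 := by
        apply div_nonpos_of_nonpos_of_nonneg <;> linarith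
      right; constructor <;> linarith
  have hpos : uIcc u₀ w ⊆ Ioi 0 := fun x hx => lt_of_lt_of_le (lt_min hu₀ hw) hx.1
  have hcont : ContinuousOn (logitTime a u₀) (uIcc u₀ w) := fun x hx =>
    (hasDerivAt_logitTime a hu₀.ne' (hpos hx)).continuousAt.continuousWithinAt
  obtain ⟨x, hx, rfl⟩ := intermediate_value_uIcc hcont hy
  exact ⟨x, hpos hx, rfl⟩

/-- Closed-form solution of the cross-entropy learning dynamics in the degenerate
case: `u ↦ (1/(2a))(log(u/u₀) + Ei(u) − Ei(u₀))` is a strictly increasing bijection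
from `[u₀, ∞)` to `[0, ∞)`, and its inverse solves the logit ODE. -/
theorem stmt_15 (a : ℝ) (ha : 0 < a) (u₀ : ℝ) (hu₀ : 0 < u₀) :
    StrictMonoOn (fun u => 1 / (2 * a) * (Real.log (u / u₀) + expInt u - expInt u₀))
        (Set.Ici u₀) ∧
      Set.BijOn (fun u => 1 / (2 * a) * (Real.log (u / u₀) + expInt u - expInt u₀))
        (Set.Ici u₀) (Set.Ici 0) ∧
      ∃ u : ℝ → ℝ, u 0 = u₀ ∧
        (∀ t ≥ (0:ℝ), HasDerivAt u (2 * a * u t / (1 + Real.exp (u t))) t) ∧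
        ∀ v ∈ Set.Ici u₀,
          u (1 / (2 * a) * (Real.log (v / u₀) + expInt v - expInt u₀)) = v := by
  have hmono := strictMonoOn_logitTime ha hu₀.ne'
  have hsurj := surjOn_logitTime ha hu₀
  have hIci : Ici u₀ ⊆ Ioi 0 := Ici_subset_Ioi.2 hu₀
  obtain ⟨u, hu_left, hu⟩ := exists_hasDerivAt_inverse isOpen_Ioi hmono hsurj
    (fun x hx => hasDerivAt_logitTime a hu₀.ne' hx)
    (fun x (hx : 0 < x) => by positivity)
  have hbij := hmono.bijOn_Ici hIci (hsurj.mono subset_rfl (subset_univ _))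
  rw [logitTime_self] at hbij
  refine ⟨hmono.mono hIci, hbij, u, ?_, fun t _ => ?_, fun v hv => hu_left v (hIci hv)⟩
  · simpa only [logitTime_self] using hu_left u₀ hu₀
  · obtain ⟨hut : 0 < u t, hderiv⟩ := hu t
    convert hderiv using 1
    field_simp
end

section
/- Consider m mutually orthogonal vectors x₁, …, x_m ∈ ℝ^d all of the same norm a > 0, and gradient-flow dynamics (y^i)'(t) = a²·z(t)/(1 + exp(z(t) y^i(t))), z'(t) = Σ_{i=1}^m y^i(t)/(1 + exp(z(t) y^i(t))). If y^1(0) = … = y^m(0) = y₀ > 0, then y^1(t) = … = y^m(t) for all t ≥ 0, and if additionally m·y₀² = a²·z(0)² with z(0) > 0, then u(t) := z(t)·y^1(t) satisfies u'(t) = 2√m·a·u(t)/(1 + exp(u(t))). -/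
/-!
All the `y i` solve the same scalar equation `y' = a² z(t) / (1 + e^{z(t) y})`, whose right-hand
side is Lipschitz in `y` with constant `a² z(t)² / 4` (the sigmoid is `1/4`-Lipschitz), uniformly
on compact time intervals; by Grönwall they coincide. Then `z' = m y / (1 + e^{z y})`, and
`w = √m y - a z` solves the linear equation `w' = -(√m a / (1 + e^{z y})) w` with `w(0) = 0`, so
`√m y = a z` for all time. Hence
`(z y)' = (m y² + a² z²) / (1 + e^{z y}) = 2 √m a z y / (1 + e^{z y})`.
-/

open Set Real

lemma Real.lipschitzWith_sigmoid : LipschitzWith 4⁻¹ sigmoid :=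
  lipschitzWith_of_nnnorm_deriv_le differentiable_sigmoid fun x => by
    have h₀ := sigmoid_pos x
    have h₁ := sigmoid_lt_one x
    rw [deriv_sigmoid, ← NNReal.coe_le_coe, coe_nnnorm, norm_eq_abs,
      abs_of_pos (by nlinarith)]
    push_cast
    nlinarith [sq_nonneg (2 * sigmoid x - 1)]

lemma abs_inv_one_add_exp_sub_le (p q : ℝ) :
    |(1 + exp p)⁻¹ - (1 + exp q)⁻¹| ≤ |p - q| / 4 := by
  have := lipschitzWith_sigmoid.dist_le_mul (-p) (-q)
  simp only [dist_eq_norm, norm_eq_abs, sigmoid_def, neg_neg, NNReal.coe_inv] at this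
  rw [neg_sub_neg, abs_sub_comm q p] at this
  push_cast at this
  linarith

lemma abs_mul_div_one_add_exp_sub_le (c w p q : ℝ) :
    |c * w / (1 + exp (w * p)) - c * w / (1 + exp (w * q))| ≤ |c| * w ^ 2 / 4 * |p - q| :=
  calc |c * w / (1 + exp (w * p)) - c * w / (1 + exp (w * q))|
      = |c| * |w| * |(1 + exp (w * p))⁻¹ - (1 + exp (w * q))⁻¹| := by
        rw [div_eq_mul_inv, div_eq_mul_inv, ← mul_sub, abs_mul, abs_mul]
    _ ≤ |c| * |w| * (|w * p - w * q| / 4) := by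
        gcongr; exact abs_inv_one_add_exp_sub_le _ _
    _ = |c| * w ^ 2 / 4 * |p - q| := by
        rw [← mul_sub, abs_mul, ← sq_abs w]; ring

section

variable {t₀ : ℝ}

lemma eq_of_hasDerivAt_mul_div_one_add_exp {c : ℝ} {z f g : ℝ → ℝ}
    (hz : ∀ t ≥ t₀, ContinuousAt z t)
    (hf : ∀ t ≥ t₀, HasDerivAt f (c * z t / (1 + exp (z t * f t))) t)
    (hg : ∀ t ≥ t₀, HasDerivAt g (c * z t / (1 + exp (z t * g t))) t)
    (h₀ : f t₀ = g t₀) : ∀ t ≥ t₀, f t = g t := by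
  intro T hT
  obtain ⟨C, hC⟩ := isCompact_Icc.exists_bound_of_continuousOn
    (fun t ht => (hz t ht.1).continuousWithinAt : ContinuousOn z (Icc t₀ T))
  refine sub_eq_zero.1 <| eq_zero_of_abs_deriv_le_mul_abs_self_of_eq_zero_right
    (f := f - g) (K := |c| * C ^ 2 / 4)
    (fun t ht => ((hf t ht.1).continuousAt.sub (hg t ht.1).continuousAt).continuousWithinAt)
    (fun t ht => ((hf t ht.1).sub (hg t ht.1)).hasDerivWithinAt)
    (sub_eq_zero.2 h₀) (fun t ht => ?_) T ⟨hT, le_rfl⟩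
  have hzC : z t ^ 2 ≤ C ^ 2 := by
    rw [← sq_abs]
    exact pow_le_pow_left₀ (abs_nonneg _) (hC t (Ico_subset_Icc_self ht)) 2
  simp only [norm_eq_abs, Pi.sub_apply]
  calc _ ≤ |c| * z t ^ 2 / 4 * |f t - g t| := abs_mul_div_one_add_exp_sub_le _ _ _ _
    _ ≤ |c| * C ^ 2 / 4 * |f t - g t| := by gcongr

lemma mul_eq_mul_of_hasDerivAt {a b : ℝ} {Y z : ℝ → ℝ}
    (hY : ∀ t ≥ t₀, HasDerivAt Y (a ^ 2 * z t / (1 + exp (z t * Y t))) t)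
    (hz : ∀ t ≥ t₀, HasDerivAt z (b ^ 2 * Y t / (1 + exp (z t * Y t))) t)
    (h₀ : b * Y t₀ = a * z t₀) : ∀ t ≥ t₀, b * Y t = a * z t := by
  intro T hT
  refine sub_eq_zero.1 <| eq_zero_of_abs_deriv_le_mul_abs_self_of_eq_zero_right
    (f := fun t => b * Y t - a * z t) (K := |a * b|)
    (fun t ht => (((hY t ht.1).continuousAt.const_mul b).sub
      ((hz t ht.1).continuousAt.const_mul a)).continuousWithinAt)
    (fun t ht => (((hY t ht.1).const_mul b).sub ((hz t ht.1).const_mul a)).hasDerivWithinAt)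
    (sub_eq_zero.2 h₀) (fun t ht => ?_) T ⟨hT, le_rfl⟩
  have hD : 1 ≤ 1 + exp (z t * Y t) := le_add_of_nonneg_right (exp_nonneg _)
  have hw : b * (a ^ 2 * z t / (1 + exp (z t * Y t)))
      - a * (b ^ 2 * Y t / (1 + exp (z t * Y t)))
      = -(a * b) * (b * Y t - a * z t) / (1 + exp (z t * Y t)) := by
    ring
  rw [norm_eq_abs, norm_eq_abs, hw, abs_div, abs_mul, abs_neg,
    abs_of_pos (zero_lt_one.trans_le hD)]
  exact div_le_self (by positivity) hD

end

lemma hasDerivAt_mul_of_mul_eq_mul {a b D t : ℝ} {Y z : ℝ → ℝ}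
    (hY : HasDerivAt Y (a ^ 2 * z t / D) t) (hz : HasDerivAt z (b ^ 2 * Y t / D) t)
    (hbal : b * Y t = a * z t) :
    HasDerivAt (fun s => z s * Y s) (2 * b * a * (z t * Y t) / D) t := by
  refine (hz.mul hY).congr_deriv ?_
  linear_combination (b * Y t - a * z t) / D * hbal

theorem stmt_17_general (m : ℕ) (hm : 0 < m) (a : ℝ) (ha : 0 < a)
    (y : Fin m → ℝ → ℝ) (z : ℝ → ℝ)
    (hy : ∀ i, ∀ t ≥ (0:ℝ), HasDerivAt (y i)
      (a ^ 2 * z t / (1 + Real.exp (z t * y i t))) t)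
    (hz : ∀ t ≥ (0:ℝ), HasDerivAt z
      (∑ i, y i t / (1 + Real.exp (z t * y i t))) t)
    (y₀ : ℝ) (hy₀pos : 0 < y₀) (hinit : ∀ i, y i 0 = y₀) :
    (∀ t ≥ (0:ℝ), ∀ i j, y i t = y j t) ∧
      ((m : ℝ) * y₀ ^ 2 = a ^ 2 * z 0 ^ 2 → 0 < z 0 →
        ∀ t ≥ (0:ℝ), HasDerivAt (fun s => z s * y ⟨0, hm⟩ s)
          (2 * Real.sqrt m * a * (z t * y ⟨0, hm⟩ t)
            / (1 + Real.exp (z t * y ⟨0, hm⟩ t))) t) := by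
  have hsymm : ∀ t ≥ (0:ℝ), ∀ i j, y i t = y j t := fun t ht i j =>
    eq_of_hasDerivAt_mul_div_one_add_exp (fun s hs => (hz s hs).continuousAt) (hy i) (hy j)
      (by rw [hinit, hinit]) t ht
  refine ⟨hsymm, fun hbal hz₀ => ?_⟩
  have hzY : ∀ t ≥ (0:ℝ),
      HasDerivAt z (√m ^ 2 * y ⟨0, hm⟩ t / (1 + exp (z t * y ⟨0, hm⟩ t))) t := by
    intro t ht
    convert hz t ht using 1
    simp only [hsymm t ht _ ⟨0, hm⟩, Finset.sum_const, Finset.card_univ, Fintype.card_fin,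
      nsmul_eq_mul, sq_sqrt (Nat.cast_nonneg m), mul_div_assoc]
  have hY₀ : √m * y ⟨0, hm⟩ 0 = a * z 0 := by
    rw [hinit]
    refine (pow_left_inj₀ (by positivity) (by positivity) two_ne_zero).1 ?_
    rw [mul_pow, mul_pow, sq_sqrt (Nat.cast_nonneg m), hbal]
  exact fun t ht => hasDerivAt_mul_of_mul_eq_mul (hy _ t ht) (hzY t ht)
    (mul_eq_mul_of_hasDerivAt (hy _) hzY hY₀ t ht)

/-- Relaxation to a class of `m` mutually orthogonal datapoints of equal norm `a`:
the projections stay equal, and under balanced initialization the logit satisfies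
`u' = 2√m·a·u/(1 + e^u)`. -/
theorem stmt_17 (d m : ℕ) (hm : 0 < m) (a : ℝ) (ha : 0 < a)
    (x : Fin m → EuclideanSpace ℝ (Fin d))
    (horth : ∀ i j, i ≠ j → inner ℝ (x i) (x j) = (0:ℝ))
    (hnorm : ∀ i, ‖x i‖ = a)
    (y : Fin m → ℝ → ℝ) (z : ℝ → ℝ)
    (hy : ∀ i, ∀ t ≥ (0:ℝ), HasDerivAt (y i)
      (a ^ 2 * z t / (1 + Real.exp (z t * y i t))) t)
    (hz : ∀ t ≥ (0:ℝ), HasDerivAt z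
      (∑ i, y i t / (1 + Real.exp (z t * y i t))) t)
    (y₀ : ℝ) (hy₀pos : 0 < y₀) (hinit : ∀ i, y i 0 = y₀) :
    (∀ t ≥ (0:ℝ), ∀ i j, y i t = y j t) ∧
      ((m : ℝ) * y₀ ^ 2 = a ^ 2 * z 0 ^ 2 → 0 < z 0 →
        ∀ t ≥ (0:ℝ), HasDerivAt (fun s => z s * y ⟨0, hm⟩ s)
          (2 * Real.sqrt m * a * (z t * y ⟨0, hm⟩ t)
            / (1 + Real.exp (z t * y ⟨0, hm⟩ t))) t) :=
  stmt_17_general m hm a ha y z hy hz y₀ hy₀pos hinit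
end
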